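/- Every G_M-invariant holomorphic 1-form on ℍ × ℂⁿ vanishes. Precisely: let L : ℂ × ℂⁿ → ℂ × ℂⁿ be the ℂ-linear map L(w, z) = (α w, Rᵀ z), and let F : ℍ × ℂⁿ → (ℂ × ℂⁿ →_ℂ ℂ) be a holomorphic map into the space of ℂ-linear functionals such that F(p + u_i) = F(p) for all p ∈ ℍ × ℂⁿ and all i ∈ {1, …, 2n+1}, and F(L(p)) ∘ L = F(p) for all p ∈ ℍ × ℂⁿ. Then F(p) = 0 for all p ∈ ℍ × ℂⁿ. -/

import Mathlib

/-!
The vectors `(a⁽ⁱ⁾, b₁⁽ⁱ⁾, …, bₙ⁽ⁱ⁾)` span `ℝ × ℂⁿ` over `ℝ`: a real vector `x` with `a ⬝ᵥ x = 0` and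
all `b_j ⬝ᵥ x = 0` also has `b̄_j ⬝ᵥ x = 0`, and `a, b_j, b̄_j` form a basis of `ℂ^{2n+1}`, lying in
the generalized eigenspaces of `M` for the distinct eigenvalues `α`, `β_j`, `β̄_j`. So a slice
`{w} × ℂⁿ` is covered by lattice translates of a compact set, `F(w, ·)` is bounded, hence constant
by Liouville. Then `w ↦ F(w, 0)` has the periods `a⁽ⁱ⁾`, which generate a dense subgroup of `ℝ`
because `α` is irrational; so it is invariant under all real translations, its derivative vanishes,
and `F` is a constant `c`. Finally `c ∘ L = c` forces `c = 0`, as `L` fixes no nonzero vector: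
`α ≠ 1`, and `1` is not an eigenvalue of `R`, whose eigenvalues are among the `β_j`.
-/

open Matrix Polynomial

/-- The translation vectors `uᵢ = (a⁽ⁱ⁾, b₁⁽ⁱ⁾, …, bₙ⁽ⁱ⁾) ∈ ℂ × ℂⁿ`. -/
def inoueU (n : ℕ) (a : Fin (2*n+1) → ℝ) (b : Fin n → (Fin (2*n+1) → ℂ))
    (i : Fin (2*n+1)) : ℂ × (Fin n → ℂ) :=
  ((a i : ℂ), fun j => b j i)

namespace Module.End

section Star

variable {K V : Type*} [CommRing K] [StarRing K] [AddCommGroup V] [Module K V]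
  [StarAddMonoid V] [StarModule K V] {f : Module.End K V}

theorem pow_sub_smul_one_star_apply (hf : ∀ x, f (star x) = star (f x)) (μ : K) (k : ℕ)
    (x : V) : ((f - star μ • 1) ^ k) (star x) = star (((f - μ • 1) ^ k) x) := by
  induction k generalizing x with
  | zero => rfl
  | succ k ih =>
    simp only [pow_succ, Module.End.mul_apply, LinearMap.sub_apply, LinearMap.smul_apply,
      Module.End.one_apply, hf, ← star_smul, ← star_sub, ih]

theorem star_mem_maxGenEigenspace (hf : ∀ x, f (star x) = star (f x)) {μ : K} {x : V}
    (hx : x ∈ f.maxGenEigenspace μ) : star x ∈ f.maxGenEigenspace (star μ) := by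
  obtain ⟨k, hk⟩ := (mem_maxGenEigenspace _ _ _).mp hx
  exact (mem_maxGenEigenspace _ _ _).mpr ⟨k, by rw [pow_sub_smul_one_star_apply hf, hk, star_zero]⟩

theorem star_mem_iSup_maxGenEigenspace (hf : ∀ x, f (star x) = star (f x)) {ι : Type*}
    (β : ι → K) {x : V} (hx : x ∈ ⨆ i, f.maxGenEigenspace (β i)) :
    star x ∈ ⨆ i, f.maxGenEigenspace (star (β i)) := by
  refine Submodule.iSup_induction _ (motive := fun y => star y ∈ _) hx
    (fun i y hy => Submodule.mem_iSup_of_mem i (star_mem_maxGenEigenspace hf hy))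
    (by rw [star_zero]; exact zero_mem _) (fun y z hy hz => ?_)
  rw [star_add]; exact add_mem hy hz

end Star

variable {K V : Type*} [Field K] [AddCommGroup V] [Module K V] (f : Module.End K V)

theorem linearIndependent_sum_elim_of_mem_biSup_maxGenEigenspace {ι ι' : Type*}
    {S T : Set K} (hST : Disjoint S T) {v : ι → V} {v' : ι' → V}
    (hv : LinearIndependent K v) (hv' : LinearIndependent K v')
    (hvS : ∀ i, v i ∈ ⨆ μ ∈ S, f.maxGenEigenspace μ)
    (hvT : ∀ i, v' i ∈ ⨆ μ ∈ T, f.maxGenEigenspace μ) :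
    LinearIndependent K (Sum.elim v v') :=
  hv.sum_type hv' <| ((f.independent_maxGenEigenspace).disjoint_biSup_biSup hST).mono
    (Submodule.span_le.mpr <| Set.range_subset_iff.mpr hvS)
    (Submodule.span_le.mpr <| Set.range_subset_iff.mpr hvT)

end Module.End

theorem LinearIndependent.star {K V ι : Type*} [CommRing K] [StarRing K] [AddCommGroup V]
    [Module K V] [StarAddMonoid V] [StarModule K V] {v : ι → V} (hv : LinearIndependent K v) :
    LinearIndependent K (fun i => Star.star (v i)) :=
  hv.map_of_injective_injectiveₛ Star.star (starAddEquiv : V ≃+ V).toAddMonoidHom star_injective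
    star_injective fun r m => by
      change Star.star (Star.star r • m) = r • Star.star m
      rw [star_smul, star_star]

theorem Matrix.eq_zero_of_dotProduct_eq_zero_of_span_eq_top {K m ι : Type*} [CommSemiring K]
    [Fintype m] {w : ι → m → K} (hw : Submodule.span K (Set.range w) = ⊤) {x : m → K}
    (hx : ∀ k, x ⬝ᵥ w k = 0) : x = 0 :=
  dotProduct_eq_zero x fun y =>
    LinearMap.congr_fun (LinearMap.ext_on_range hw (f := dotProductBilin K K x) (g := 0) hx) y

theorem Matrix.map_ofReal_mulVec_star {m : Type*} [Fintype m] (A : Matrix m m ℝ) (x : m → ℂ) :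
    A.map (↑) *ᵥ star x = star (A.map (↑) *ᵥ x) := by
  ext i
  simp [mulVec, dotProduct]

section RealEigenvectors

variable {m ι : Type*} [Fintype m] (A : Matrix m m ℝ) {α : ℝ} {a : m → ℝ}
  {β : ι → ℂ} {b : ι → m → ℂ}

theorem linearIndependent_sum_elim_realEigenvector_star (ha0 : a ≠ 0) (ha : A *ᵥ a = α • a)
    (hβ : ∀ j, 0 < (β j).im)
    (hbmem : ∀ j, b j ∈ ⨆ i, Module.End.maxGenEigenspace (A.map ((↑) : ℝ → ℂ)).mulVecLin (β i))
    (hb : LinearIndependent ℂ b) :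
    LinearIndependent ℂ
      (Sum.elim (fun _ : Unit => fun i => (a i : ℂ)) (Sum.elim b fun j => star (b j))) := by
  set f : Module.End ℂ (m → ℂ) := (A.map ((↑) : ℝ → ℂ)).mulVecLin
  have ha_mem : (fun i => (a i : ℂ)) ∈ ⨆ μ ∈ ({(α : ℂ)} : Set ℂ), f.maxGenEigenspace μ := by
    rw [iSup_singleton]
    refine Module.End.eigenspace_le_maxGenEigenspace (Module.End.mem_eigenspace_iff.mpr ?_)
    ext i
    simpa [f, mulVec, dotProduct] using congr_arg ((↑) : ℝ → ℂ) (congr_fun ha i)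
  have hb_mem (j : ι) : b j ∈ ⨆ μ ∈ {μ : ℂ | 0 < μ.im}, f.maxGenEigenspace μ :=
    iSup_le (fun i => le_biSup (fun μ => f.maxGenEigenspace μ)
      (show β i ∈ {μ : ℂ | 0 < μ.im} from hβ i)) (hbmem j)
  have hb_star_mem (j : ι) : star (b j) ∈ ⨆ μ ∈ {μ : ℂ | μ.im < 0}, f.maxGenEigenspace μ :=
    iSup_le (fun i => le_biSup (fun μ => f.maxGenEigenspace μ)
      (show star (β i) ∈ {μ : ℂ | μ.im < 0} by simpa using hβ i))
      (Module.End.star_mem_iSup_maxGenEigenspace A.map_ofReal_mulVec_star β (hbmem j))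
  have hbc : LinearIndependent ℂ (Sum.elim b fun j => star (b j)) :=
    f.linearIndependent_sum_elim_of_mem_biSup_maxGenEigenspace
      (Set.disjoint_left.mpr fun μ (h₁ : 0 < μ.im) (h₂ : μ.im < 0) => lt_asymm h₁ h₂)
      hb hb.star hb_mem hb_star_mem
  refine f.linearIndependent_sum_elim_of_mem_biSup_maxGenEigenspace
    (T := {μ : ℂ | 0 < μ.im} ∪ {μ : ℂ | μ.im < 0}) (by simp)
    (linearIndependent_unique_iff.mpr fun h => ha0 (funext fun i => by simpa using congr_fun h i))
    hbc (fun _ => ha_mem) ?_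
  rw [iSup_union]
  rintro (j | j)
  · exact Submodule.mem_sup_left (hb_mem j)
  · exact Submodule.mem_sup_right (hb_star_mem j)

theorem span_real_columns_eq_top [Fintype ι] (hcard : Fintype.card m = 2 * Fintype.card ι + 1)
    (ha0 : a ≠ 0) (ha : A *ᵥ a = α • a) (hβ : ∀ j, 0 < (β j).im)
    (hbmem : ∀ j, b j ∈ ⨆ i, Module.End.maxGenEigenspace (A.map ((↑) : ℝ → ℂ)).mulVecLin (β i))
    (hb : LinearIndependent ℂ b) :
    Submodule.span ℝ (Set.range fun i => (a i, fun j => b j i)) = ⊤ := by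
  have hspan := (linearIndependent_sum_elim_realEigenvector_star A ha0 ha hβ hbmem hb
    ).span_eq_top_of_card_eq_finrank' (by simp [hcard]; ring)
  refine LinearIndependent.span_eq_top_of_card_eq_finrank' ?_ ?_
  · rw [Fintype.linearIndependent_iff]
    intro g hg
    have hfst : ∑ i, g i * a i = 0 := by simpa [Prod.fst_sum] using congr_arg Prod.fst hg
    have hsnd (j : ι) : ∑ i, (g i : ℂ) * b j i = 0 := by
      simpa [Prod.snd_sum, Finset.sum_apply, Complex.real_smul] using
        congr_fun (congr_arg Prod.snd hg) j
    have hx := eq_zero_of_dotProduct_eq_zero_of_span_eq_top hspan (x := fun i => (g i : ℂ)) ?_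
    · intro i; simpa using congr_fun hx i
    rintro (_ | j | j)
    · simpa [dotProduct] using congr_arg ((↑) : ℝ → ℂ) hfst
    · simpa [dotProduct] using hsnd j
    · simpa [dotProduct, ← map_sum] using congr_arg star (hsnd j)
  · simp [Module.finrank_pi_fintype, hcard]; ring

end RealEigenvectors

theorem Module.End.eq_zero_of_mulVec_eq_self {K V ι κ : Type*} [Field K] [AddCommGroup V]
    [Module K V] [Fintype ι] {f : Module.End K V} {β : κ → K} (hβ : ∀ i, β i ≠ 1)
    {b : ι → V} (hbmem : ∀ j, b j ∈ ⨆ i, f.maxGenEigenspace (β i)) (hb : LinearIndependent K b)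
    {R : Matrix ι ι K} (hR : ∀ j, f (b j) = ∑ l, R l j • b l) {d : ι → K} (hd : R *ᵥ d = d) :
    d = 0 := by
  set x := ∑ j, d j • b j
  have hfx : f x = x := by
    calc f x = ∑ l, (R *ᵥ d) l • b l := by
          simp only [x, map_sum, map_smul, hR, Finset.smul_sum, smul_smul, mulVec, dotProduct,
            Finset.sum_smul]
          rw [Finset.sum_comm]
          simp only [mul_comm]
      _ = x := by rw [hd]
  have hx1 : x ∈ f.maxGenEigenspace 1 :=
    eigenspace_le_maxGenEigenspace (mem_eigenspace_iff.mpr (by rw [hfx, one_smul]))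
  have hxβ : x ∈ ⨆ μ ∈ Set.range β, f.maxGenEigenspace μ := by
    rw [iSup_range]
    exact Submodule.sum_mem _ fun j _ => Submodule.smul_mem _ _ (hbmem j)
  have hx0 : x = 0 := Submodule.disjoint_def.mp
    (f.independent_maxGenEigenspace.disjoint_biSup (x := 1) (y := Set.range β)
      fun ⟨i, hi⟩ => hβ i hi) x hx1 hxβ
  exact funext (Fintype.linearIndependent_iff.mp hb d hx0)

theorem LinearMap.eq_zero_of_comp_eq_self {K V W : Type*} [Field K] [AddCommGroup V]
    [Module K V] [FiniteDimensional K V] [AddCommGroup W] [Module K W]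
    {T : V →ₗ[K] V} (hT : ∀ v, T v = v → v = 0) {c : V →ₗ[K] W} (hc : c ∘ₗ T = c) :
    c = 0 := by
  have hinj : Function.Injective ⇑(T - LinearMap.id : V →ₗ[K] V) :=
    (injective_iff_map_eq_zero _).mpr fun v hv => hT v (sub_eq_zero.mp hv)
  ext v
  obtain ⟨u, rfl⟩ := LinearMap.injective_iff_surjective.mp hinj v
  simp [← LinearMap.comp_apply, hc]

theorem Matrix.eq_zero_of_transpose_mulVec_eq_self {K n : Type*} [Field K] [Fintype n]
    [DecidableEq n] {R : Matrix n n K} (hR : ∀ d, R *ᵥ d = d → d = 0) {z : n → K}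
    (hz : Rᵀ *ᵥ z = z) : z = 0 := by
  have hunit : IsUnit (R - 1) := mulVec_injective_iff_isUnit.mp <|
    (injective_iff_map_eq_zero (mulVecLin (R - 1))).mpr fun d hd => hR d <| by
      simpa [sub_mulVec, sub_eq_zero] using hd
  have hunitT : IsUnit (Rᵀ - 1) := by simpa using (isUnit_transpose (R - 1)).mpr hunit
  refine (injective_iff_map_eq_zero (mulVecLin (Rᵀ - 1))).mp
    (mulVec_injective_iff_isUnit.mpr hunitT) z ?_
  rw [mulVecLin_apply, sub_mulVec, one_mulVec, hz, sub_self]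

theorem dense_addSubgroupClosure_range_of_irrational_eigenvalue {m : Type*} [Fintype m]
    (M : Matrix m m ℤ) {α : ℝ} (hα : Irrational α) {a : m → ℝ} (ha0 : a ≠ 0)
    (ha : M.map (↑) *ᵥ a = α • a) : Dense (AddSubgroup.closure (Set.range a) : Set ℝ) := by
  obtain ⟨i₀, hi₀⟩ := Function.ne_iff.mp ha0
  by_contra hdense
  have hrat (j : m) : ∃ q : ℚ, (q : ℝ) = a j / a i₀ := by
    by_contra! hq
    refine hdense ((dense_addSubgroupClosure_pair_iff.mpr fun ⟨q, h⟩ => hq q h).mono ?_)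
    exact AddSubgroup.closure_mono (Set.pair_subset ⟨j, rfl⟩ ⟨i₀, rfl⟩)
  choose q hq using hrat
  -- row `i₀` of `M a = α a` writes `α` as an integer combination of the ratios `a j / a i₀`
  refine hα ⟨∑ j, M i₀ j * q j, ?_⟩
  have hrow := congr_fun ha i₀
  simp only [mulVec, dotProduct, map_apply, Pi.smul_apply, smul_eq_mul] at hrow
  push_cast [hq]
  simp_rw [← mul_div_assoc, ← Finset.sum_div, hrow]
  exact mul_div_cancel_right₀ α hi₀

theorem isBounded_range_of_periodic {ι E X : Type*} [Fintype ι] [AddCommGroup E] [Module ℝ E]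
    [TopologicalSpace E] [ContinuousAdd E] [ContinuousSMul ℝ E] [PseudoMetricSpace X]
    {u : ι → E} (hu : Submodule.span ℝ (Set.range u) = ⊤) {G : E → X} (hG : Continuous G)
    (hper : ∀ i, Function.Periodic G (u i)) : Bornology.IsBounded (Set.range G) := by
  set φ : (ι → ℝ) → E := fun y => ∑ i, y i • u i
  have hφ : Continuous φ := by fun_prop
  have hint (k : ι → ℤ) : Function.Periodic G (∑ i, k i • u i) :=
    Finset.sum_induction _ (Function.Periodic G) (fun _ _ => Function.Periodic.add_period)
      (fun e => by rw [add_zero]) fun i _ => (hper i).zsmul (k i)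
  refine (((isCompact_Icc (a := (0 : ι → ℝ)) (b := 1)).image hφ).image hG).isBounded.subset ?_
  rintro _ ⟨e, rfl⟩
  obtain ⟨x, rfl⟩ :=
    (Submodule.mem_span_range_iff_exists_fun ℝ).mp (hu ▸ Submodule.mem_top (x := e))
  refine ⟨φ fun i => Int.fract (x i),
    ⟨_, ⟨fun i => Int.fract_nonneg _, fun i => (Int.fract_lt_one _).le⟩, rfl⟩, ?_⟩
  have hsplit : ∑ i, x i • u i = φ (fun i => Int.fract (x i)) + ∑ i, ⌊x i⌋ • u i := by
    simp only [φ, ← Finset.sum_add_distrib, ← Int.cast_smul_eq_zsmul ℝ, ← add_smul,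
      Int.fract_add_floor]
  rw [hsplit, hint]

theorem Function.Periodic.of_dense_addSubgroupClosure {E X : Type*} [AddGroup E]
    [TopologicalSpace E] [ContinuousAdd E] [TopologicalSpace X] [T2Space X] {G : E → X}
    (hG : Continuous G) {S : Set E} (hS : Dense (AddSubgroup.closure S : Set E))
    (hper : ∀ s ∈ S, Function.Periodic G s) (t : E) :
    Function.Periodic G t := by
  have hclosed : IsClosed {c | Function.Periodic G c} := by
    simp only [Function.Periodic, Set.ofPred_forall]
    exact isClosed_iInter fun x => isClosed_eq (hG.comp (continuous_const_add x)) continuous_const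
  have hsub : (AddSubgroup.closure S : Set E) ⊆ {c | Function.Periodic G c} := fun c hc => by
    induction hc using AddSubgroup.closure_induction with
    | mem s hs => exact hper s hs
    | zero => exact fun x => by rw [add_zero]
    | add _ _ _ _ h₁ h₂ => exact h₁.add_period h₂
    | neg _ _ h => exact h.neg
  exact closure_minimal hsub hclosed (hS.closure_eq ▸ Set.mem_univ t)

theorem IsOpen.eq_of_forall_add_ofReal {X : Type*} [NormedAddCommGroup X] [NormedSpace ℂ X]
    {U : Set ℂ} (hU : IsOpen U) (hU' : IsPreconnected U) {g : ℂ → X}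
    (hg : DifferentiableOn ℂ g U) (hper : ∀ w ∈ U, ∀ t : ℝ, g (w + t) = g w) {w w' : ℂ}
    (hw : w ∈ U) (hw' : w' ∈ U) : g w = g w' := by
  refine hU.is_const_of_deriv_eq_zero hU' hg (fun z hz => ?_) hw hw'
  have hderiv : HasDerivAt (fun t : ℝ => g (z + t)) (deriv g z) 0 := by
    have hline : HasDerivAt (fun t : ℝ => z + (t : ℂ)) 1 0 := by
      simpa using ((hasDerivAt_id (0 : ℝ)).ofReal_comp).const_add z
    have hg' : HasDerivAt g (deriv g z) (z + ((0 : ℝ) : ℂ)) := by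
      simpa using (hg.differentiableAt (hU.mem_nhds hz)).hasDerivAt
    simpa [Function.comp_def] using hg'.scomp (0 : ℝ) hline
  have hconst : (fun t : ℝ => g (z + t)) = fun _ => g z := funext (hper z hz)
  exact hderiv.unique (hconst ▸ hasDerivAt_const 0 (g z))

section HalfPlaneProduct

variable {E X ι : Type*} [NormedAddCommGroup E] [NormedSpace ℂ E] [NormedAddCommGroup X]
  [NormedSpace ℂ X] [Fintype ι] {F : ℂ × E → X} {u : ι → ℝ × E}

theorem apply_eq_apply_zero_of_periodic (hF : DifferentiableOn ℂ F {p : ℂ × E | 0 < p.1.im})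
    (hu : Submodule.span ℝ (Set.range u) = ⊤)
    (hper : ∀ p ∈ {p : ℂ × E | 0 < p.1.im}, ∀ i, F (p + (((u i).1 : ℂ), (u i).2)) = F p)
    {w : ℂ} (hw : 0 < w.im) (z : E) : F (w, z) = F (w, 0) := by
  set G : ℝ × E → X := fun e => F ((e.1 : ℂ) + w.im * Complex.I, e.2)
  have hGcont : Continuous G :=
    hF.continuousOn.comp_continuous (by fun_prop) fun e => by simp [hw]
  have hGper (i : ι) : Function.Periodic G (u i) := fun e => by
    have := hper ((e.1 : ℂ) + w.im * Complex.I, e.2) (by simp [hw]) i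
    simp only [G, Prod.fst_add, Prod.snd_add, Complex.ofReal_add, Prod.mk_add_mk] at this ⊢
    rw [← this, add_right_comm]
  have hdiff : Differentiable ℂ fun z : E => F (w, z) := fun z =>
    (hF.differentiableAt ((isOpen_lt continuous_const (by fun_prop)).mem_nhds hw)).comp z
      (by fun_prop)
  refine hdiff.apply_eq_apply_of_bounded
    ((isBounded_range_of_periodic hu hGcont hGper).subset ?_) z 0
  rintro _ ⟨z, rfl⟩
  exact ⟨(w.re, z), by simp [G, Complex.re_add_im]⟩

theorem apply_add_ofReal_eq_of_periodic (hF : DifferentiableOn ℂ F {p : ℂ × E | 0 < p.1.im})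
    (hu : Submodule.span ℝ (Set.range u) = ⊤)
    (hper : ∀ p ∈ {p : ℂ × E | 0 < p.1.im}, ∀ i, F (p + (((u i).1 : ℂ), (u i).2)) = F p)
    (hdense : Dense (AddSubgroup.closure (Set.range fun i => (u i).1) : Set ℝ))
    {w : ℂ} (hw : 0 < w.im) (t : ℝ) : F (w + t, 0) = F (w, 0) := by
  have hcont : Continuous fun s : ℝ => F (w + s, 0) :=
    hF.continuousOn.comp_continuous (by fun_prop) fun s => by simp [hw]
  have hperiods : ∀ s ∈ Set.range fun i => (u i).1,
      Function.Periodic (fun s : ℝ => F (w + s, 0)) s := by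
    rintro _ ⟨i, rfl⟩ s
    have hws : 0 < (w + s).im := by simpa using hw
    calc F (w + ↑(s + (u i).1), 0) = F (w + s + (u i).1, (u i).2) := by
          rw [Complex.ofReal_add, ← add_assoc,
            apply_eq_apply_zero_of_periodic hF hu hper (by simpa using hws) (u i).2]
      _ = F (w + s, 0) := by simpa using hper (w + s, 0) hws i
  simpa using Function.Periodic.of_dense_addSubgroupClosure hcont hdense hperiods t 0

theorem apply_eq_apply_I_zero_of_periodic (hF : DifferentiableOn ℂ F {p : ℂ × E | 0 < p.1.im})
    (hu : Submodule.span ℝ (Set.range u) = ⊤)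
    (hper : ∀ p ∈ {p : ℂ × E | 0 < p.1.im}, ∀ i, F (p + (((u i).1 : ℂ), (u i).2)) = F p)
    (hdense : Dense (AddSubgroup.closure (Set.range fun i => (u i).1) : Set ℝ))
    {p : ℂ × E} (hp : 0 < p.1.im) : F p = F (Complex.I, 0) := by
  rw [← Prod.mk.eta (p := p), apply_eq_apply_zero_of_periodic hF hu hper hp]
  refine (isOpen_lt continuous_const Complex.continuous_im).eq_of_forall_add_ofReal
    (g := fun w => F (w, 0)) (convex_halfSpace_im_gt 0).isPreconnected ?_
    (fun w hw t => apply_add_ofReal_eq_of_periodic hF hu hper hdense hw t) hp (by simp)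
  exact hF.comp (by fun_prop) fun w hw => hw

end HalfPlaneProduct

theorem inoue_no_invariant_one_forms_general
    (n : ℕ)
    (M : Matrix (Fin (2*n+1)) (Fin (2*n+1)) ℤ)
    (α : ℝ) (hα0 : 0 < α) (hα1 : α ≠ 1) (hαirr : Irrational α)
    (β : Fin n → ℂ) (hβ : ∀ j, 0 < (β j).im)
    (a : Fin (2*n+1) → ℝ) (ha0 : a ≠ 0)
    (ha : (M.map (Int.cast : ℤ → ℝ)).mulVec a = α • a)
    (b : Fin n → (Fin (2*n+1) → ℂ))
    (hbmem : ∀ j, b j ∈ ⨆ i, Module.End.maxGenEigenspace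
        (Matrix.mulVecLin (M.map (Int.cast : ℤ → ℂ))) (β i))
    (hbind : LinearIndependent ℂ b)
    (R : Matrix (Fin n) (Fin n) ℂ)
    (hR : ∀ j, (M.map (Int.cast : ℤ → ℂ)).mulVec (b j) = ∑ ℓ, R ℓ j • b ℓ)
    (L : (ℂ × (Fin n → ℂ)) →L[ℂ] (ℂ × (Fin n → ℂ)))
    (hL : ∀ p : ℂ × (Fin n → ℂ), L p = ((α : ℂ) * p.1, Rᵀ.mulVec p.2))
    (F : ℂ × (Fin n → ℂ) → ((ℂ × (Fin n → ℂ)) →L[ℂ] ℂ))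
    (hF : DifferentiableOn ℂ F {p : ℂ × (Fin n → ℂ) | 0 < p.1.im})
    (hFtrans : ∀ p ∈ {p : ℂ × (Fin n → ℂ) | 0 < p.1.im}, ∀ i : Fin (2*n+1),
      F (p + inoueU n a b i) = F p)
    (hFL : ∀ p ∈ {p : ℂ × (Fin n → ℂ) | 0 < p.1.im}, (F (L p)).comp L = F p) :
    ∀ p ∈ {p : ℂ × (Fin n → ℂ) | 0 < p.1.im}, F p = 0 := by
  have hMC : (M.map (Int.cast : ℤ → ℝ)).map ((↑) : ℝ → ℂ) = M.map Int.cast := by ext; simp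
  have hspan := span_real_columns_eq_top (M.map Int.cast) (by simp) ha0 ha hβ (hMC ▸ hbmem) hbind
  have hdense := dense_addSubgroupClosure_range_of_irrational_eigenvalue M hαirr ha0 ha
  have hconst (p : ℂ × (Fin n → ℂ)) (hp : 0 < p.1.im) : F p = F (Complex.I, 0) :=
    apply_eq_apply_I_zero_of_periodic hF hspan hFtrans hdense hp
  have hRfix (d : Fin n → ℂ) (hd : R *ᵥ d = d) : d = 0 :=
    Module.End.eq_zero_of_mulVec_eq_self (fun i h => by simpa [h] using hβ i) hbmem hbind hR hd
  have hLfix (q : ℂ × (Fin n → ℂ)) (hq : L q = q) : q = 0 := by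
    rw [hL, Prod.ext_iff] at hq
    refine Prod.ext ?_ (Matrix.eq_zero_of_transpose_mulVec_eq_self hRfix hq.2)
    have : ((α : ℂ) - 1) * q.1 = 0 := by linear_combination hq.1
    exact (mul_eq_zero.mp this).resolve_left (sub_ne_zero.mpr (by exact_mod_cast hα1))
  have hL_comp : (F (Complex.I, 0)).comp L = F (Complex.I, 0) := by
    have := hFL (Complex.I, 0) (by simp)
    rwa [hconst _ (by simp [hL, hα0])] at this
  intro p hp
  rw [hconst p hp]
  exact ContinuousLinearMap.coe_injective <| LinearMap.eq_zero_of_comp_eq_self hLfix <|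
    LinearMap.ext (ContinuousLinearMap.ext_iff.mp hL_comp)

/-- **Proposition (Endo–Pajitnov)**.  There are no non-trivial `G_M`-invariant holomorphic
`1`-forms on `ℍ × ℂⁿ`.  Precisely: let `L(w, z) = (α w, Rᵀ z)` and let
`F : ℍ × ℂⁿ → (ℂ × ℂⁿ →_ℂ ℂ)` be a holomorphic family of `ℂ`-linear functionals such that
`F(p + uᵢ) = F(p)` for all `p` and `i` and `F(L(p)) ∘ L = F(p)` for all `p`.
Then `F ≡ 0` on `ℍ × ℂⁿ`. -/
theorem inoue_no_invariant_one_forms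
    (n : ℕ) (hn : 1 ≤ n)
    (M : Matrix (Fin (2*n+1)) (Fin (2*n+1)) ℤ) (hdet : M.det = 1)
    (α : ℝ) (hα0 : 0 < α) (hα1 : α ≠ 1) (hαirr : Irrational α)
    (β : Fin n → ℂ) (hβ : ∀ j, 0 < (β j).im)
    (hchar : (M.map (Int.cast : ℤ → ℂ)).charpoly
      = (X - C (α : ℂ)) * ∏ j, ((X - C (β j)) * (X - C (starRingEnd ℂ (β j)))))
    (a : Fin (2*n+1) → ℝ) (ha0 : a ≠ 0)
    (ha : (M.map (Int.cast : ℤ → ℝ)).mulVec a = α • a)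
    (b : Fin n → (Fin (2*n+1) → ℂ))
    (hbmem : ∀ j, b j ∈ ⨆ i, Module.End.maxGenEigenspace
        (Matrix.mulVecLin (M.map (Int.cast : ℤ → ℂ))) (β i))
    (hbind : LinearIndependent ℂ b)
    (hbspan : Submodule.span ℂ (Set.range b)
      = ⨆ i, Module.End.maxGenEigenspace
        (Matrix.mulVecLin (M.map (Int.cast : ℤ → ℂ))) (β i))
    (R : Matrix (Fin n) (Fin n) ℂ)
    (hR : ∀ j, (M.map (Int.cast : ℤ → ℂ)).mulVec (b j) = ∑ ℓ, R ℓ j • b ℓ)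
    (L : (ℂ × (Fin n → ℂ)) →L[ℂ] (ℂ × (Fin n → ℂ)))
    (hL : ∀ p : ℂ × (Fin n → ℂ), L p = ((α : ℂ) * p.1, Rᵀ.mulVec p.2))
    (F : ℂ × (Fin n → ℂ) → ((ℂ × (Fin n → ℂ)) →L[ℂ] ℂ))
    (hF : DifferentiableOn ℂ F {p : ℂ × (Fin n → ℂ) | 0 < p.1.im})
    (hFtrans : ∀ p ∈ {p : ℂ × (Fin n → ℂ) | 0 < p.1.im}, ∀ i : Fin (2*n+1),
      F (p + inoueU n a b i) = F p)
    (hFL : ∀ p ∈ {p : ℂ × (Fin n → ℂ) | 0 < p.1.im}, (F (L p)).comp L = F p) :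
    ∀ p ∈ {p : ℂ × (Fin n → ℂ) | 0 < p.1.im}, F p = 0 :=
  inoue_no_invariant_one_forms_general n M α hα0 hα1 hαirr β hβ a ha0 ha b hbmem hbind R hR L hL F
    hF hFtrans hFL
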